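/- arXiv:1509.03063 — 6 statements merged into one kernel-verified Lean document; each statement's English description precedes it below -/
import Mathlib

section
/- For every real a > 0 and every real c, the improper integral lim_{R→∞} ∫_{−R}^{R} exp(−(i a x²)/2 + i c x) dx exists and equals √(2π/a) · exp(−iπ/4) · exp(i c²/(2a)). -/
/-!
For `0 < re b` the integral `∫ exp (-b x² + i c x) dx = (π / b) ^ (1/2) exp (-c² / (4 b))` is the
Fourier transform of a Gaussian. On the boundary `re b = 0` (with `im b > 0`) the integrand is
no longer integrable, but integrating by parts against its logarithmic derivative
`-2 b x + i c`, whose imaginary part grows linearly, bounds the tails `∫_R^T` by `O(1/R)`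
uniformly in `0 ≤ re b` and `T`. Hence `∫_{-R}^R` is within `O(1/R)` of the Gaussian integral
for `b + ε`, `ε > 0`; letting `ε → 0` for fixed `R` (both sides are continuous in `b`) and then
`R → ∞` gives the formula at `b = i a / 2`.
-/

open Filter Real Complex intervalIntegral MeasureTheory Set Topology
open scoped Interval

noncomputable def gaussianChirp (b : ℂ) (c x : ℝ) : ℂ := cexp (-b * x ^ 2 + I * c * x)

theorem norm_gaussianChirp (b : ℂ) (c x : ℝ) :
    ‖gaussianChirp b c x‖ = Real.exp (-b.re * x ^ 2) := by
  simp [gaussianChirp, Complex.norm_exp, ← ofReal_pow]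

theorem norm_gaussianChirp_le_one {b : ℂ} (c : ℝ) (hb : 0 ≤ b.re) (x : ℝ) :
    ‖gaussianChirp b c x‖ ≤ 1 := by
  rw [norm_gaussianChirp, Real.exp_le_one_iff]
  nlinarith [sq_nonneg x]

theorem continuous_gaussianChirp (b : ℂ) (c : ℝ) : Continuous (gaussianChirp b c) := by
  unfold gaussianChirp; fun_prop

theorem gaussianChirp_neg (b : ℂ) (c x : ℝ) :
    gaussianChirp b c (-x) = gaussianChirp b (-c) x := by
  simp only [gaussianChirp]; push_cast; ring_nf

theorem hasDerivAt_gaussianChirp (b : ℂ) (c x : ℝ) :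
    HasDerivAt (gaussianChirp b c) ((-2 * b * x + I * c) * gaussianChirp b c x) x := by
  have h : HasDerivAt (fun y : ℂ => -b * y ^ 2 + I * c * y) (-2 * b * x + I * c) x :=
    (((hasDerivAt_pow 2 (x : ℂ)).const_mul (-b)).add
      ((hasDerivAt_id (x : ℂ)).const_mul (I * c))).congr_deriv (by push_cast; ring)
  exact h.comp_ofReal.cexp.congr_deriv (mul_comm _ _)

theorem integral_gaussianChirp {b : ℂ} (c : ℝ) (hb : 0 < b.re) :
    ∫ x, gaussianChirp b c x = (π / b) ^ (1 / 2 : ℂ) * cexp (-c ^ 2 / (4 * b)) := by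
  simpa [gaussianChirp, ← Complex.exp_add, add_comm] using fourierIntegral_gaussian hb c

theorem integrable_gaussianChirp {b : ℂ} (c : ℝ) (hb : 0 < b.re) :
    Integrable (gaussianChirp b c) := by
  unfold gaussianChirp; simpa using integrable_cexp_quadratic hb (I * c) 0

-- `-2 * b * x + I * c` is the logarithmic derivative of `gaussianChirp b c`.
theorem im_mul_le_norm_logDeriv {b : ℂ} {c x : ℝ} (hc : |c| ≤ b.im * x) :
    b.im * x ≤ ‖-2 * b * x + I * c‖ := by
  have him : (-2 * b * x + I * c).im = c - 2 * (b.im * x) := by simp; ring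
  refine le_trans ?_ (abs_im_le_norm _)
  rw [him, abs_sub_comm]
  linarith [le_abs_self c, le_abs_self (2 * (b.im * x) - c)]

theorem cpow_one_half_ofReal_mul_neg_I {r : ℝ} (hr : 0 < r) :
    ((r : ℂ) * -I) ^ (1 / 2 : ℂ) = √r * cexp (-(I * π) / 4) := by
  rw [cpow_def_of_ne_zero (mul_ne_zero (by exact_mod_cast hr.ne') (neg_ne_zero.mpr I_ne_zero)),
    log_ofReal_mul hr (neg_ne_zero.mpr I_ne_zero), log_neg_I, add_mul, Complex.exp_add,
    Real.sqrt_eq_rpow, ofReal_cpow hr.le, cpow_def_of_ne_zero (by exact_mod_cast hr.ne'),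
    ofReal_log hr.le]
  congr 2
  · push_cast; ring
  · ring

theorem integral_inv_sq_of_pos {R T : ℝ} (hR : 0 < R) (hRT : R ≤ T) :
    ∫ x in R..T, (x ^ 2)⁻¹ = R⁻¹ - T⁻¹ := by
  have hpos : ∀ x ∈ [[R, T]], 0 < x := fun x hx => hR.trans_le (by simpa [hRT] using hx.1)
  rw [integral_eq_sub_of_hasDerivAt (f := fun x => -x⁻¹) (f' := fun x => (x ^ 2)⁻¹)
    (fun x hx => by simpa using (hasDerivAt_inv (hpos x hx).ne').fun_neg)
    ((continuousOn_id.pow 2).inv₀ fun x hx => (pow_pos (hpos x hx) 2).ne').intervalIntegrable]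
  ring

section Tails

variable {b : ℂ} {c R T : ℝ}

theorem integral_gaussianChirp_eq_by_parts (hl : ∀ x ∈ [[R, T]], -2 * b * x + I * c ≠ 0) :
    ∫ x in R..T, gaussianChirp b c x =
      gaussianChirp b c T / (-2 * b * T + I * c) - gaussianChirp b c R / (-2 * b * R + I * c)
        - ∫ x in R..T, 2 * b / (-2 * b * x + I * c) ^ 2 * gaussianChirp b c x := by
  set l : ℝ → ℂ := fun x => -2 * b * x + I * c
  have hl' (x : ℝ) : HasDerivAt l (-2 * b) x := by
    simpa [l] using ((ofRealCLM.hasDerivAt (x := x)).const_mul (-2 * b)).add_const (I * c)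
  have hlc : Continuous l := by fun_prop
  have hu (x) (hx : x ∈ [[R, T]]) : HasDerivAt (fun x => (l x)⁻¹) (2 * b / l x ^ 2) x :=
    ((hl' x).inv (hl x hx)).congr_deriv (by ring)
  have hu' : ContinuousOn (fun x => 2 * b / l x ^ 2) [[R, T]] :=
    continuousOn_const.div (hlc.pow 2).continuousOn fun x hx => pow_ne_zero 2 (hl x hx)
  have hparts := integral_mul_deriv_eq_deriv_mul hu (fun x _ => hasDerivAt_gaussianChirp b c x)
    hu'.intervalIntegrable ((hlc.mul (continuous_gaussianChirp b c)).intervalIntegrable _ _)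
  rw [integral_congr fun x hx => inv_mul_cancel_left₀ (hl x hx) (gaussianChirp b c x)] at hparts
  simp only [hparts, div_eq_inv_mul, l]

theorem norm_integral_remainder_gaussianChirp_le (hb : 0 ≤ b.re) (him : 0 < b.im) (hR : 0 < R)
    (hc : |c| ≤ b.im * R) (hRT : R ≤ T) :
    ‖∫ x in R..T, 2 * b / (-2 * b * x + I * c) ^ 2 * gaussianChirp b c x‖
      ≤ 2 * ‖b‖ / (b.im ^ 2 * R) := by
  have hpt : ∀ x ∈ Ioc R T, ‖2 * b / (-2 * b * x + I * c) ^ 2 * gaussianChirp b c x‖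
      ≤ 2 * ‖b‖ / b.im ^ 2 * (x ^ 2)⁻¹ := by
    intro x hx
    have hpos : 0 < b.im * x := mul_pos him (hR.trans hx.1)
    have hlow := im_mul_le_norm_logDeriv (hc.trans (mul_le_mul_of_nonneg_left hx.1.le him.le))
    rw [norm_mul, norm_div, norm_pow, norm_mul, Complex.norm_ofNat]
    calc _ ≤ 2 * ‖b‖ / (b.im * x) ^ 2 * 1 := by
          gcongr
          exact norm_gaussianChirp_le_one c hb x
      _ = _ := by ring
  have hint : IntervalIntegrable (fun x => 2 * ‖b‖ / b.im ^ 2 * (x ^ 2)⁻¹) volume R T :=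
    (continuousOn_const.mul ((continuousOn_id.pow 2).inv₀ fun x hx =>
      (pow_pos (hR.trans_le (by simpa [hRT] using hx.1)) 2).ne')).intervalIntegrable
  calc _ ≤ ∫ x in R..T, 2 * ‖b‖ / b.im ^ 2 * (x ^ 2)⁻¹ :=
        norm_integral_le_of_norm_le hRT (ae_of_all _ hpt) hint
    _ = 2 * ‖b‖ / b.im ^ 2 * (R⁻¹ - T⁻¹) := by
        rw [intervalIntegral.integral_const_mul, integral_inv_sq_of_pos hR hRT]
    _ ≤ 2 * ‖b‖ / (b.im ^ 2 * R) := by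
        rw [← div_div, div_eq_mul_inv _ R]
        gcongr
        linarith [inv_nonneg.mpr (hR.le.trans hRT)]

theorem norm_integral_gaussianChirp_le (hb : 0 ≤ b.re) (him : 0 < b.im) (hR : 0 < R)
    (hc : |c| ≤ b.im * R) (hRT : R ≤ T) :
    ‖∫ x in R..T, gaussianChirp b c x‖ ≤ 4 * ‖b‖ / (b.im ^ 2 * R) := by
  have hmem {x} (hx : x ∈ [[R, T]]) : R ≤ x := by simpa [hRT] using hx.1
  have hlow {x} (hx : x ∈ [[R, T]]) : b.im * R ≤ ‖-2 * b * x + I * c‖ :=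
    (by gcongr; exact hmem hx : b.im * R ≤ b.im * x).trans
      (im_mul_le_norm_logDeriv (hc.trans (by gcongr; exact hmem hx)))
  have hboundary {x} (hx : x ∈ [[R, T]]) :
      ‖gaussianChirp b c x / (-2 * b * x + I * c)‖ ≤ 1 / (b.im * R) := by
    rw [norm_div]
    exact div_le_div₀ zero_le_one (norm_gaussianChirp_le_one c hb x) (by positivity) (hlow hx)
  have him_le : b.im ≤ ‖b‖ := (le_abs_self _).trans (abs_im_le_norm b)
  rw [integral_gaussianChirp_eq_by_parts fun x hx =>
    norm_pos_iff.mp ((mul_pos him hR).trans_le (hlow hx))]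
  calc _ ≤ 1 / (b.im * R) + 1 / (b.im * R) + 2 * ‖b‖ / (b.im ^ 2 * R) :=
        norm_sub_le_of_le (norm_sub_le_of_le (hboundary right_mem_uIcc)
          (hboundary left_mem_uIcc)) (norm_integral_remainder_gaussianChirp_le hb him hR hc hRT)
    _ ≤ 4 * ‖b‖ / (b.im ^ 2 * R) := by
        have hinv : 1 / (b.im * R) = b.im / (b.im ^ 2 * R) := by field_simp
        rw [hinv, ← add_div, ← add_div]
        gcongr
        linarith

theorem norm_integral_gaussianChirp_symm_sub_le (hb : 0 ≤ b.re)
    (him : 0 < b.im) (hR : 0 < R) (hc : |c| ≤ b.im * R) (hRT : R ≤ T) :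
    ‖(∫ x in -T..T, gaussianChirp b c x) - ∫ x in -R..R, gaussianChirp b c x‖
      ≤ 8 * ‖b‖ / (b.im ^ 2 * R) := by
  have hint (u v : ℝ) : IntervalIntegrable (gaussianChirp b c) volume u v :=
    (continuous_gaussianChirp b c).intervalIntegrable u v
  have hleft : ∫ x in -T..-R, gaussianChirp b c x = ∫ x in R..T, gaussianChirp b (-c) x := by
    simp_rw [← gaussianChirp_neg, integral_comp_neg]
  have hsplit : (∫ x in -T..T, gaussianChirp b c x) - ∫ x in -R..R, gaussianChirp b c x
      = (∫ x in R..T, gaussianChirp b (-c) x) + ∫ x in R..T, gaussianChirp b c x := by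
    rw [← integral_add_adjacent_intervals (hint (-T) (-R)) (hint (-R) T),
      ← integral_add_adjacent_intervals (hint (-R) R) (hint R T), hleft]
    ring
  rw [hsplit]
  calc _ ≤ 4 * ‖b‖ / (b.im ^ 2 * R) + 4 * ‖b‖ / (b.im ^ 2 * R) :=
        norm_add_le_of_le (norm_integral_gaussianChirp_le hb him hR (by rwa [abs_neg]) hRT)
          (norm_integral_gaussianChirp_le hb him hR hc hRT)
    _ = 8 * ‖b‖ / (b.im ^ 2 * R) := by ring

theorem norm_integral_gaussianChirp_sub_le (hb : 0 < b.re) (him : 0 < b.im)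
    (hR : 0 < R) (hc : |c| ≤ b.im * R) :
    ‖(∫ x, gaussianChirp b c x) - ∫ x in -R..R, gaussianChirp b c x‖
      ≤ 8 * ‖b‖ / (b.im ^ 2 * R) :=
  le_of_tendsto (((intervalIntegral_tendsto_integral (integrable_gaussianChirp c hb)
      tendsto_neg_atTop_atBot tendsto_id).sub_const _).norm)
    (eventually_atTop.2 ⟨R, fun _ hT =>
      norm_integral_gaussianChirp_symm_sub_le hb.le him hR hc hT⟩)

end Tails

theorem continuousAt_gaussianIntegral_formula (c : ℝ) {b : ℂ} (him : b.im ≠ 0) :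
    ContinuousAt (fun b : ℂ => (π / b) ^ (1 / 2 : ℂ) * cexp (-c ^ 2 / (4 * b))) b := by
  have hb0 : b ≠ 0 := fun h => by simp [h] at him
  have hslit : (π : ℂ) / b ∈ slitPlane := by
    simp [mem_slitPlane_iff, div_im, him, hb0, pi_ne_zero]
  have h4b : (4 : ℂ) * b ≠ 0 := mul_ne_zero (by norm_num) hb0
  exact ((continuousAt_cpow_const hslit).comp (continuousAt_const.div continuousAt_id hb0)).mul
    (by fun_prop (disch := exact h4b))

theorem norm_gaussianIntegral_formula_sub_integral_le {b : ℂ} {c R : ℝ} (hb : 0 ≤ b.re)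
    (him : 0 < b.im) (hR : 0 < R) (hc : |c| ≤ b.im * R) :
    ‖(π / b) ^ (1 / 2 : ℂ) * cexp (-c ^ 2 / (4 * b)) - ∫ x in -R..R, gaussianChirp b c x‖
      ≤ 8 * ‖b‖ / (b.im ^ 2 * R) := by
  have hshift : Tendsto (fun ε : ℝ => b + ε) (𝓝[>] 0) (𝓝 b) := by
    simpa using (tendsto_const_nhds.add (continuous_ofReal.tendsto 0)).mono_left
      nhdsWithin_le_nhds
  have hcont : Continuous fun b : ℂ => ∫ x in -R..R, gaussianChirp b c x := by
    unfold gaussianChirp; fun_prop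
  refine le_of_tendsto_of_tendsto
    ((((continuousAt_gaussianIntegral_formula c him.ne').tendsto.comp hshift).sub
      (hcont.continuousAt.tendsto.comp hshift)).norm)
    ((((continuous_norm.tendsto b).comp hshift).const_mul 8).div_const (b.im ^ 2 * R)) ?_
  filter_upwards [self_mem_nhdsWithin] with ε hε
  have hre : 0 < (b + ε).re := by
    rw [add_re, ofReal_re]; linarith [mem_Ioi.mp hε]
  have him_eq : (b + ε).im = b.im := by simp
  have := norm_integral_gaussianChirp_sub_le hre (him_eq ▸ him) hR (him_eq ▸ hc)
  rwa [integral_gaussianChirp c hre, him_eq] at this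

theorem tendsto_integral_gaussianChirp {b : ℂ} (hb : 0 ≤ b.re) (him : 0 < b.im) (c : ℝ) :
    Tendsto (fun R => ∫ x in -R..R, gaussianChirp b c x) atTop
      (𝓝 ((π / b) ^ (1 / 2 : ℂ) * cexp (-c ^ 2 / (4 * b)))) := by
  have hbound : Tendsto (fun R : ℝ => 8 * ‖b‖ / (b.im ^ 2 * R)) atTop (𝓝 0) :=
    tendsto_const_nhds.div_atTop (tendsto_id.const_mul_atTop (pow_pos him 2))
  refine tendsto_iff_norm_sub_tendsto_zero.2
    (squeeze_zero' (.of_forall fun _ => norm_nonneg _) ?_ hbound)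
  filter_upwards [eventually_gt_atTop 0, eventually_ge_atTop (|c| / b.im)] with R hR hcR
  rw [norm_sub_rev]
  exact norm_gaussianIntegral_formula_sub_integral_le hb him hR
    (by rwa [div_le_iff₀' him] at hcR)

/-- Fresnel integral with linear phase: for `a > 0` and `c : ℝ`,
`lim_{R→∞} ∫_{-R}^{R} exp(-(i a x²)/2 + i c x) dx = √(2π/a) ⬝ exp(-iπ/4) ⬝ exp(i c²/(2a))`. -/
theorem fresnel_integral_linear_phase (a c : ℝ) (ha : 0 < a) :
    Tendsto (fun R : ℝ => ∫ x in (-R)..R,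
        Complex.exp (-(Complex.I * a * x ^ 2) / 2 + Complex.I * c * x)) atTop
      (nhds ((Real.sqrt (2 * π / a) : ℂ) * Complex.exp (-(Complex.I * π) / 4) *
        Complex.exp (Complex.I * c ^ 2 / (2 * a)))) := by
  have ha' : (a : ℂ) ≠ 0 := ofReal_ne_zero.mpr ha.ne'
  have hbase : (π : ℂ) / (I * a / 2) = ((2 * π / a : ℝ) : ℂ) * -I := by
    push_cast
    field_simp
    ring_nf
    simp [I_sq]
  have hexponent : -(c : ℂ) ^ 2 / (4 * (I * a / 2)) = I * c ^ 2 / (2 * a) := by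
    field_simp
    ring_nf
    simp [I_sq]
  have h := tendsto_integral_gaussianChirp (b := I * a / 2) (by simp) (by simpa using ha) c
  rw [hbase, hexponent, cpow_one_half_ofReal_mul_neg_I (by positivity)] at h
  refine h.congr fun R => integral_congr fun x _ => ?_
  simp only [gaussianChirp]
  ring_nf
end

section
/- For every real a > 0, the improper integral lim_{R→∞} ∫_{−R}^{R} exp(i a x²) dx exists and equals √(π/a) · exp(iπ/4). -/
/-!
Integrating by parts with `exp (b x²) = d/dx [exp (b x²) / (2 b x)] + exp (b x²) / (2 b x²)` on
`[1, R]` shows that, for `b ≠ 0` with `re b ≤ 0`, `∫_{-R}^{R} exp (b x²) dx` converges as `R → ∞`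
to an expression `2 S(b)` built from absolutely convergent integrals. By dominated convergence
`S(b - ε) → S(b)` as `ε → 0⁺`, and for `re b < 0` the Gaussian integral gives
`2 S(b) = (π / -b) ^ (1/2)`; since `π / -b` stays off the branch cut, the formula persists for
`re b = 0`. At `b = i a` we have `π / -b = (π / a) i`, whose principal square root is
`√(π / a) e^{iπ/4}`.
-/

open Filter Real Complex intervalIntegral MeasureTheory Set Topology

/-- `S(b) = ∫₀^∞ exp (b x²) dx`, with the integral over `[1, ∞)` integrated by parts. -/
noncomputable def halfGaussianIntegral (b : ℂ) : ℂ :=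
  (∫ x in (0 : ℝ)..1, cexp (b * x ^ 2)) - cexp b / (2 * b)
    + ∫ x in Ioi (1 : ℝ), cexp (b * x ^ 2) / (2 * b * x ^ 2)

section
variable {b : ℂ}

lemma norm_cexp_mul_sq_le_one (hb : b.re ≤ 0) (x : ℝ) : ‖cexp (b * x ^ 2)‖ ≤ 1 := by
  rw [Complex.norm_exp, Real.exp_le_one_iff, ← ofReal_pow, re_mul_ofReal]
  exact mul_nonpos_of_nonpos_of_nonneg hb (sq_nonneg x)

lemma norm_cexp_mul_sq_div_le (hb : b.re ≤ 0) {x : ℝ} (hx : 0 < x) :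
    ‖cexp (b * x ^ 2) / (2 * b * x ^ 2)‖ ≤ (2 * ‖b‖)⁻¹ * x ^ (-2 : ℝ) := by
  have hden : ‖2 * b * (x : ℂ) ^ 2‖ = 2 * ‖b‖ * x ^ 2 := by simp
  rw [norm_div, hden, Real.rpow_neg hx.le, Real.rpow_two, div_eq_inv_mul, mul_inv]
  exact mul_le_of_le_one_right (by positivity) (norm_cexp_mul_sq_le_one hb x)

lemma integrableOn_Ioi_cexp_mul_sq_div (hb : b.re ≤ 0) :
    IntegrableOn (fun x : ℝ => cexp (b * x ^ 2) / (2 * b * x ^ 2)) (Ioi 1) := by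
  refine ((integrableOn_Ioi_rpow_of_lt (a := -2) (by norm_num) one_pos).const_mul
    (2 * ‖b‖)⁻¹).mono' (Measurable.aestronglyMeasurable (by fun_prop)) ?_
  filter_upwards [ae_restrict_mem measurableSet_Ioi] with x hx
  exact norm_cexp_mul_sq_div_le hb (one_pos.trans hx)

lemma hasDerivAt_cexp_mul_sq_div (hb : b ≠ 0) {x : ℝ} (hx : x ≠ 0) :
    HasDerivAt (fun y : ℝ => cexp (b * y ^ 2) / (2 * b * y))
      (cexp (b * x ^ 2) - cexp (b * x ^ 2) / (2 * b * x ^ 2)) x := by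
  have hid : HasDerivAt (fun y : ℝ => (y : ℂ)) 1 x := hasDerivAt_id x |>.ofReal_comp
  have hnum := ((hid.fun_pow 2).const_mul b).cexp
  have hden := hid.const_mul (2 * b)
  refine (hnum.fun_div hden (by simp [hb, hx])).congr_deriv ?_
  have hxC : (x : ℂ) ≠ 0 := ofReal_ne_zero.mpr hx
  field_simp
  ring

lemma integral_one_cexp_mul_sq (hb : b ≠ 0) {R : ℝ} (hR : 0 < R) :
    ∫ x in (1 : ℝ)..R, cexp (b * x ^ 2) = cexp (b * R ^ 2) / (2 * b * R) - cexp b / (2 * b)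
      + ∫ x in (1 : ℝ)..R, cexp (b * x ^ 2) / (2 * b * x ^ 2) := by
  have hne : ∀ x ∈ uIcc (1 : ℝ) R, x ≠ 0 := fun x hx =>
    (lt_min one_pos hR |>.trans_le hx.1).ne'
  have hquot : IntervalIntegrable (fun x : ℝ => cexp (b * x ^ 2) / (2 * b * x ^ 2)) volume 1 R :=
    ContinuousOn.intervalIntegrable (by fun_prop (disch := simp_all))
  have hftc := integral_eq_sub_of_hasDerivAt
    (fun x hx => hasDerivAt_cexp_mul_sq_div hb (hne x hx))
    ((Continuous.intervalIntegrable (by fun_prop) _ _).sub hquot)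
  rw [integral_sub (Continuous.intervalIntegrable (by fun_prop) _ _) hquot] at hftc
  simp only [ofReal_one, one_pow, mul_one] at hftc
  rw [← hftc]
  ring

lemma tendsto_cexp_mul_sq_div_atTop (hb : b.re ≤ 0) :
    Tendsto (fun R : ℝ => cexp (b * R ^ 2) / (2 * b * R)) atTop (𝓝 0) := by
  refine squeeze_zero_norm' (a := fun R => (2 * ‖b‖)⁻¹ * R⁻¹) ?_
    (by simpa using tendsto_inv_atTop_zero.const_mul (2 * ‖b‖)⁻¹)
  filter_upwards [eventually_gt_atTop 0] with R hR
  have hden : ‖2 * b * (R : ℂ)‖ = 2 * ‖b‖ * R := by simp [hR.le]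
  rw [norm_div, hden, div_eq_inv_mul, mul_inv]
  exact mul_le_of_le_one_right (mul_nonneg (by positivity) (inv_nonneg.2 hR.le))
    (norm_cexp_mul_sq_le_one hb R)

lemma tendsto_integral_zero_cexp_mul_sq (hb0 : b ≠ 0) (hb : b.re ≤ 0) :
    Tendsto (fun R : ℝ => ∫ x in (0 : ℝ)..R, cexp (b * x ^ 2)) atTop
      (𝓝 (halfGaussianIntegral b)) := by
  have htail := intervalIntegral_tendsto_integral_Ioi 1 (integrableOn_Ioi_cexp_mul_sq_div hb)
    tendsto_id
  have hlim := (((tendsto_cexp_mul_sq_div_atTop hb).sub_const (cexp b / (2 * b))).add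
    htail).const_add (∫ x in (0 : ℝ)..1, cexp (b * x ^ 2))
  rw [zero_sub, ← add_assoc, ← sub_eq_add_neg] at hlim
  refine hlim.congr' ?_
  filter_upwards [eventually_gt_atTop 0] with R hR
  rw [← integral_add_adjacent_intervals (a := 0) (b := 1) (c := R)
    (Continuous.intervalIntegrable (by fun_prop) _ _)
    (Continuous.intervalIntegrable (by fun_prop) _ _), integral_one_cexp_mul_sq hb0 hR, id]

lemma integral_symm_cexp_mul_sq (b : ℂ) (R : ℝ) :
    ∫ x in (-R)..R, cexp (b * x ^ 2) = 2 * ∫ x in (0 : ℝ)..R, cexp (b * x ^ 2) := by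
  rw [← integral_add_adjacent_intervals (b := 0) (Continuous.intervalIntegrable (by fun_prop) _ _)
    (Continuous.intervalIntegrable (by fun_prop) _ _), two_mul]
  congr 1
  have := integral_comp_neg (a := 0) (b := R) fun x : ℝ => cexp (b * x ^ 2)
  simp only [ofReal_neg, neg_sq, neg_zero] at this
  exact this.symm

lemma tendsto_integral_symm_cexp_mul_sq (hb0 : b ≠ 0) (hb : b.re ≤ 0) :
    Tendsto (fun R : ℝ => ∫ x in (-R)..R, cexp (b * x ^ 2)) atTop
      (𝓝 (2 * halfGaussianIntegral b)) := by
  simpa only [integral_symm_cexp_mul_sq] using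
    (tendsto_integral_zero_cexp_mul_sq hb0 hb).const_mul 2

lemma two_mul_halfGaussianIntegral_of_re_neg (hb : b.re < 0) :
    2 * halfGaussianIntegral b = (π / -b) ^ (1 / 2 : ℂ) := by
  have hb' : 0 < (-b).re := by simpa using hb
  have hint : Integrable fun x : ℝ => cexp (b * x ^ 2) := by
    simpa using integrable_cexp_neg_mul_sq hb'
  refine tendsto_nhds_unique
    (tendsto_integral_symm_cexp_mul_sq (by rintro rfl; simp at hb) hb.le) ?_
  rw [← integral_gaussian_complex hb']
  simpa using intervalIntegral_tendsto_integral hint tendsto_neg_atTop_atBot tendsto_id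

lemma norm_le_norm_sub_ofReal (hb : b.re ≤ 0) {ε : ℝ} (hε : 0 ≤ ε) : ‖b‖ ≤ ‖b - ε‖ := by
  rw [← sq_le_sq₀ (norm_nonneg _) (norm_nonneg _), Complex.sq_norm, Complex.sq_norm,
    normSq_apply, normSq_apply]
  simp only [sub_re, ofReal_re, sub_im, ofReal_im, sub_zero]
  nlinarith

lemma tendsto_sub_ofReal_nhdsGT (b : ℂ) : Tendsto (fun ε : ℝ => b - ε) (𝓝[>] 0) (𝓝 b) :=
  ((by fun_prop : Continuous fun ε : ℝ => b - ε).tendsto' 0 b (by simp)).mono_left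
    nhdsWithin_le_nhds

lemma tendsto_halfGaussianIntegral_sub_ofReal (hb0 : b ≠ 0) (hb : b.re ≤ 0) :
    Tendsto (fun ε : ℝ => halfGaussianIntegral (b - ε)) (𝓝[>] 0)
      (𝓝 (halfGaussianIntegral b)) := by
  have hhead : Tendsto (fun c : ℂ => ∫ x in (0 : ℝ)..1, cexp (c * x ^ 2)) (𝓝 b)
      (𝓝 (∫ x in (0 : ℝ)..1, cexp (b * x ^ 2))) :=
    (continuous_parametric_intervalIntegral_of_continuous'
      (f := fun (c : ℂ) (x : ℝ) => cexp (c * x ^ 2)) (by fun_prop) 0 1).tendsto b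
  have hboundary : Tendsto (fun c : ℂ => cexp c / (2 * c)) (𝓝 b) (𝓝 (cexp b / (2 * b))) :=
    (Complex.continuous_exp.continuousAt.div (by fun_prop) (by simpa using hb0)).tendsto
  have htail : Tendsto
      (fun ε : ℝ => ∫ x in Ioi (1 : ℝ), cexp ((b - ε) * x ^ 2) / (2 * (b - ε) * x ^ 2))
      (𝓝[>] 0) (𝓝 (∫ x in Ioi (1 : ℝ), cexp (b * x ^ 2) / (2 * b * x ^ 2))) := by
    refine tendsto_integral_filter_of_dominated_convergence
      (fun x : ℝ => (2 * ‖b‖)⁻¹ * x ^ (-2 : ℝ))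
      (Eventually.of_forall fun ε => Measurable.aestronglyMeasurable (by fun_prop)) ?_
      ((integrableOn_Ioi_rpow_of_lt (by norm_num) one_pos).const_mul _) ?_
    · filter_upwards [self_mem_nhdsWithin] with ε hε
      filter_upwards [ae_restrict_mem measurableSet_Ioi] with x (hx : 1 < x)
      have hre : (b - ε).re ≤ 0 := by simpa using hb.trans (le_add_of_nonneg_right hε.le)
      refine (norm_cexp_mul_sq_div_le hre (one_pos.trans hx)).trans ?_
      gcongr
      exact norm_le_norm_sub_ofReal hb hε.le
    · filter_upwards [ae_restrict_mem measurableSet_Ioi] with x (hx : 1 < x)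
      have hcont : ContinuousAt (fun c : ℂ => cexp (c * x ^ 2) / (2 * c * x ^ 2)) b :=
        ContinuousAt.div (by fun_prop) (by fun_prop) (by simp [hb0, (one_pos.trans hx).ne'])
      exact hcont.tendsto.comp (tendsto_sub_ofReal_nhdsGT b)
  exact ((hhead.comp (tendsto_sub_ofReal_nhdsGT b)).sub
    (hboundary.comp (tendsto_sub_ofReal_nhdsGT b))).add htail

lemma div_neg_mem_slitPlane (hb0 : b ≠ 0) (hb : b.re ≤ 0) : π / -b ∈ slitPlane := by
  rw [mem_slitPlane_iff]
  rcases hb.lt_or_eq with hre | hre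
  · left
    simpa [div_re] using
      div_pos (neg_pos.2 (mul_neg_of_pos_of_neg pi_pos hre)) (normSq_pos.2 hb0)
  · right
    simpa [div_im, hb0] using fun him => hb0 (Complex.ext hre him)

lemma two_mul_halfGaussianIntegral (hb0 : b ≠ 0) (hb : b.re ≤ 0) :
    2 * halfGaussianIntegral b = (π / -b) ^ (1 / 2 : ℂ) := by
  have hpow : ContinuousAt (fun c : ℂ => (π / -c) ^ (1 / 2 : ℂ)) b :=
    (continuousAt_const.div continuousAt_id.neg (neg_ne_zero.2 hb0)).cpow continuousAt_const
      (div_neg_mem_slitPlane hb0 hb)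
  refine tendsto_nhds_unique ((tendsto_halfGaussianIntegral_sub_ofReal hb0 hb).const_mul 2)
    ((hpow.tendsto.comp (tendsto_sub_ofReal_nhdsGT b)).congr' ?_)
  filter_upwards [self_mem_nhdsWithin] with ε (hε : 0 < ε)
  refine (two_mul_halfGaussianIntegral_of_re_neg ?_).symm
  simpa using hb.trans_lt (lt_add_of_pos_right _ hε)

theorem tendsto_integral_cexp_mul_sq (hb0 : b ≠ 0) (hb : b.re ≤ 0) :
    Tendsto (fun R : ℝ => ∫ x in (-R)..R, cexp (b * x ^ 2)) atTop
      (𝓝 ((π / -b) ^ (1 / 2 : ℂ))) :=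
  two_mul_halfGaussianIntegral hb0 hb ▸ tendsto_integral_symm_cexp_mul_sq hb0 hb

end

lemma ofReal_mul_I_cpow_half {r : ℝ} (hr : 0 < r) :
    ((r : ℂ) * I) ^ (1 / 2 : ℂ) = (√r : ℂ) * cexp (I * π / 4) := by
  have hlog : Complex.log (r * I) * (1 / 2) = ((Real.log r / 2 : ℝ) : ℂ) + I * π / 4 := by
    rw [log_ofReal_mul hr I_ne_zero, log_I]
    push_cast
    ring
  rw [cpow_def_of_ne_zero (by simp [hr.ne']), hlog, Complex.exp_add, ← ofReal_exp,
    Real.sqrt_eq_rpow, Real.rpow_def_of_pos hr]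
  ring_nf

/-- Fresnel integral: for `a > 0`,
`lim_{R→∞} ∫_{-R}^{R} exp(i a x²) dx = √(π/a) ⬝ exp(iπ/4)`. -/
theorem fresnel_integral (a : ℝ) (ha : 0 < a) :
    Tendsto (fun R : ℝ => ∫ x in (-R)..R, Complex.exp (Complex.I * a * x ^ 2)) atTop
      (nhds ((Real.sqrt (π / a) : ℂ) * Complex.exp (Complex.I * π / 4))) := by
  have hb0 : I * (a : ℂ) ≠ 0 := by simp [ha.ne']
  have hval : (π : ℂ) / -(I * a) = ((π / a : ℝ) : ℂ) * I := by
    push_cast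
    field_simp
    rw [I_sq]
    ring
  simpa only [hval, ofReal_mul_I_cpow_half (div_pos pi_pos ha)] using
    tendsto_integral_cexp_mul_sq hb0 (by simp)
end

section
/- (Van der Corput's lemma) Let a < b be real numbers, ħ > 0, γ > 0, and let f : ℝ → ℝ be continuously differentiable on [a,b] with |f′(x)| ≥ γ for all x ∈ [a,b], and with f′ monotone (i.e. either monotone nondecreasing or monotone nonincreasing) on [a,b]. Then |∫_a^b exp(i f(x)/ħ) dx| ≤ 4ħ/γ. -/
/-!
Write `exp (i φ) = (1 / |φ'|) • (|φ'| • exp (i φ))`. By continuity `φ'` has constant sign, so the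
second factor is `±` the derivative of `-i exp (i φ)` and all its integrals over subintervals have
norm at most `2`; the first factor is nonnegative, monotone and at most `1 / γ`. The second mean
value theorem for integrals (in Bonnet's form, proved via the layer-cake formula and Fubini) bounds
the integral by `2 / γ`. Rescaling `φ = f / ħ` gives `2ħ/γ ≤ 4ħ/γ`.
-/

open Real Filter Set intervalIntegral MeasureTheory

section SecondMeanValue

variable {E : Type*} [NormedAddCommGroup E] [NormedSpace ℝ E] [CompleteSpace E]

lemma setIntegral_Ioc_indicator_Iio_const (v : E) {s M : ℝ} (hs : 0 ≤ s) (hsM : s ≤ M) :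
    ∫ t in Ioc 0 M, (Iio s).indicator (fun _ => v) t = s • v := by
  have : Ioc 0 M ∩ Iio s = Ioo 0 s := by
    ext t; simp only [mem_inter_iff, mem_Ioc, mem_Iio, mem_Ioo]; grind
  rw [setIntegral_indicator measurableSet_Iio, setIntegral_const, this,
    Real.volume_real_Ioo_of_le hs, sub_zero]

lemma IsLowerSet.exists_Ioc_inter_ae_eq {s : Set ℝ} (hs : IsLowerSet s) {a b : ℝ} (hab : a ≤ b) :
    ∃ d ∈ Icc a b, (Ioc a b ∩ s : Set ℝ) =ᵐ[volume] (Ioc a d : Set ℝ) := by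
  set S := insert a (Ioc a b ∩ s)
  have hSb : ∀ x ∈ S, x ≤ b := by rintro x (rfl | ⟨⟨-, hx⟩, -⟩) <;> assumption
  have hS : BddAbove S := ⟨b, hSb⟩
  refine ⟨sSup S, ⟨le_csSup hS (mem_insert a _), csSup_le (insert_nonempty _ _) hSb⟩, ?_⟩
  have hsub : Ioc a b ∩ s ⊆ Ioc a (sSup S) := fun x hx =>
    ⟨hx.1.1, le_csSup hS (mem_insert_of_mem a hx)⟩
  have hsup : Ioo a (sSup S) ⊆ Ioc a b ∩ s := by
    rintro x ⟨hax, hxd⟩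
    obtain ⟨y, hy, hxy⟩ := exists_lt_of_lt_csSup (insert_nonempty _ _) hxd
    rcases hy with rfl | ⟨⟨-, hyb⟩, hys⟩
    · exact absurd hax hxy.not_gt
    · exact ⟨⟨hax, hxy.le.trans hyb⟩, hs hxy.le hys⟩
  exact hsub.eventuallyLE.antisymm (Ioo_ae_eq_Ioc.symm.le.trans hsup.eventuallyLE)

lemma Antitone.norm_intervalIntegral_smul_le {g : ℝ → ℝ} {a b K : ℝ} (hg : Antitone g)
    {h : ℝ → E} (hab : a ≤ b) (hg0 : ∀ x ∈ Icc a b, 0 ≤ g x)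
    (hh : IntervalIntegrable h volume a b) (hK : ∀ u ∈ Icc a b, ‖∫ x in a..u, h x‖ ≤ K) :
    ‖∫ x in a..b, g x • h x‖ ≤ g a * K := by
  -- layer cake: `g x • h x = ∫ t in (0, g a], 1_{t < g x} • h x`, then swap the integrals
  let φ : ℝ × ℝ → E := {p | p.2 < g p.1}.indicator fun p => h p.1
  have hlayer : ∀ x ∈ Ioc a b, g x • h x = ∫ t in Ioc 0 (g a), φ (x, t) := fun x hx =>
    (setIntegral_Ioc_indicator_Iio_const (h x) (hg0 x (Ioc_subset_Icc_self hx))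
      (hg hx.1.le)).symm
  have hφ : Integrable φ ((volume.restrict (Ioc a b)).prod (volume.restrict (Ioc 0 (g a)))) :=
    (((intervalIntegrable_iff_integrableOn_Ioc_of_le hab).1 hh).comp_fst _).indicator
      (measurableSet_lt measurable_snd (hg.measurable.comp measurable_fst))
  have hslice : ∀ t, ‖∫ x in Ioc a b, φ (x, t)‖ ≤ K := by
    intro t
    have hlower : IsLowerSet {x | t < g x} := fun x y hyx hx => hx.trans_le (hg hyx)
    obtain ⟨d, hd, hae⟩ := hlower.exists_Ioc_inter_ae_eq hab
    calc ‖∫ x in Ioc a b, φ (x, t)‖ = ‖∫ x in Ioc a b, {x | t < g x}.indicator h x‖ := rfl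
      _ = ‖∫ x in a..d, h x‖ := by
        rw [setIntegral_indicator (measurableSet_lt measurable_const hg.measurable),
          setIntegral_congr_set hae, integral_of_le hd.1]
      _ ≤ K := hK d hd
  calc ‖∫ x in a..b, g x • h x‖ = ‖∫ x in Ioc a b, ∫ t in Ioc 0 (g a), φ (x, t)‖ := by
        rw [integral_of_le hab, setIntegral_congr_fun measurableSet_Ioc hlayer]
    _ = ‖∫ t in Ioc 0 (g a), ∫ x in Ioc a b, φ (x, t)‖ := by
        rw [integral_integral_swap (f := fun x t => φ (x, t)) hφ]
    _ ≤ K * volume.real (Ioc 0 (g a)) :=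
        norm_setIntegral_le_of_norm_le_const measure_Ioc_lt_top fun t _ => hslice t
    _ = g a * K := by
        rw [Real.volume_real_Ioc_of_le (hg0 a (left_mem_Icc.2 hab)), sub_zero, mul_comm]

lemma AntitoneOn.norm_intervalIntegral_smul_le {g : ℝ → ℝ} {a b K : ℝ}
    (hg : AntitoneOn g (Icc a b)) {h : ℝ → E} (hab : a ≤ b) (hg0 : ∀ x ∈ Icc a b, 0 ≤ g x)
    (hh : IntervalIntegrable h volume a b) (hK : ∀ u ∈ Icc a b, ‖∫ x in a..u, h x‖ ≤ K) :
    ‖∫ x in a..b, g x • h x‖ ≤ g a * K := by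
  set G := IccExtend hab (g ∘ Subtype.val)
  have hGg : EqOn G g (Icc a b) := fun x hx => IccExtend_of_mem hab _ hx
  have hG : Antitone G := fun x y hxy =>
    hg (Subtype.prop _) (Subtype.prop _) (monotone_projIcc hab hxy)
  have hbound := hG.norm_intervalIntegral_smul_le hab (fun x hx => hGg hx ▸ hg0 x hx) hh hK
  rwa [integral_congr fun x hx => by rw [hGg (uIcc_of_le hab ▸ hx)],
    hGg (left_mem_Icc.2 hab)] at hbound

lemma MonotoneOn.norm_intervalIntegral_smul_le {g : ℝ → ℝ} {a b K : ℝ}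
    (hg : MonotoneOn g (Icc a b)) {h : ℝ → E} (hab : a ≤ b) (hg0 : ∀ x ∈ Icc a b, 0 ≤ g x)
    (hh : IntervalIntegrable h volume a b) (hK : ∀ u ∈ Icc a b, ‖∫ x in u..b, h x‖ ≤ K) :
    ‖∫ x in a..b, g x • h x‖ ≤ g b * K := by
  have hg' : AntitoneOn (fun x => g (-x)) (Icc (-b) (-a)) := fun x hx y hy hxy =>
    hg (neg_mem_Icc_iff.2 hy) (neg_mem_Icc_iff.2 hx) (neg_le_neg hxy)
  have hbound := hg'.norm_intervalIntegral_smul_le (h := fun x => h (-x)) (neg_le_neg hab)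
    (fun x hx => hg0 _ (neg_mem_Icc_iff.2 hx))
    ((IntervalIntegrable.iff_comp_neg (by finiteness)).1 hh).symm
    fun u hu => by
      simpa [integral_comp_neg h] using hK (-u) (neg_mem_Icc_iff.2 (by simpa using hu))
  simpa [integral_comp_neg (fun x => g x • h x)] using hbound

lemma norm_intervalIntegral_smul_le_of_monotoneOn_or_antitoneOn {g : ℝ → ℝ} {a b C K : ℝ}
    (hg : MonotoneOn g (Icc a b) ∨ AntitoneOn g (Icc a b)) {h : ℝ → E} (hab : a ≤ b)
    (hg0 : ∀ x ∈ Icc a b, 0 ≤ g x) (hgC : ∀ x ∈ Icc a b, g x ≤ C)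
    (hh : IntervalIntegrable h volume a b)
    (hK : ∀ u ∈ Icc a b, ∀ v ∈ Icc a b, ‖∫ x in u..v, h x‖ ≤ K) :
    ‖∫ x in a..b, g x • h x‖ ≤ C * K := by
  have ha : a ∈ Icc a b := left_mem_Icc.2 hab
  have hb : b ∈ Icc a b := right_mem_Icc.2 hab
  have hK0 : 0 ≤ K := by simpa using hK a ha a ha
  rcases hg with hg | hg
  · exact (hg.norm_intervalIntegral_smul_le hab hg0 hh fun u hu => hK u hu b hb).trans
      (mul_le_mul_of_nonneg_right (hgC b hb) hK0)
  · exact (hg.norm_intervalIntegral_smul_le hab hg0 hh fun u hu => hK a ha u hu).trans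
      (mul_le_mul_of_nonneg_right (hgC a ha) hK0)

end SecondMeanValue

open Complex in
lemma norm_integral_deriv_smul_exp_mul_I_le_two {φ φ' : ℝ → ℝ} {u v : ℝ}
    (hφ : ∀ x ∈ uIcc u v, HasDerivAt φ (φ' x) x) (hφ' : ContinuousOn φ' (uIcc u v)) :
    ‖∫ x in u..v, φ' x • exp (φ x * I)‖ ≤ 2 := by
  have hprim : ∀ x ∈ uIcc u v,
      HasDerivAt (fun y => -I * exp (φ y * I)) (φ' x • exp (φ x * I)) x := fun x hx => by
    refine (((hφ x hx).ofReal_comp.mul_const I).cexp.const_mul (-I)).congr_deriv ?_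
    rw [real_smul]
    linear_combination (-(φ' x : ℂ) * exp (φ x * I)) * I_sq
  have hφc : ContinuousOn (fun x => (φ x : ℂ)) (uIcc u v) := fun x hx =>
    (hφ x hx).ofReal_comp.continuousAt.continuousWithinAt
  have hint : IntervalIntegrable (fun x => φ' x • exp (φ x * I)) volume u v :=
    (hφ'.smul ((hφc.mul continuousOn_const).cexp)).intervalIntegrable
  rw [integral_eq_sub_of_hasDerivAt hprim hint]
  calc ‖-I * exp (φ v * I) - -I * exp (φ u * I)‖
      ≤ ‖-I * exp (φ v * I)‖ + ‖-I * exp (φ u * I)‖ := norm_sub_le _ _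
    _ = 2 := by simp only [norm_mul, norm_neg, norm_I, norm_exp_ofReal_mul_I]; norm_num

lemma IsPreconnected.abs_eqOn_or_abs_eqOn_neg {s : Set ℝ} (hs : IsPreconnected s) {f : ℝ → ℝ}
    (hf : ContinuousOn f s) (hne : ∀ x ∈ s, f x ≠ 0) :
    EqOn (|f ·|) f s ∨ EqOn (|f ·|) (-f) s :=
  hs.eq_or_eq_neg_of_sq_eq hf.abs hf (fun x _ => sq_abs (f x)) fun hx => hne _ hx

open Complex in
lemma norm_integral_abs_deriv_smul_exp_mul_I_le_two {φ φ' : ℝ → ℝ} {u v : ℝ}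
    (hφ : ∀ x ∈ uIcc u v, HasDerivAt φ (φ' x) x) (hφ' : ContinuousOn φ' (uIcc u v))
    (hne : ∀ x ∈ uIcc u v, φ' x ≠ 0) :
    ‖∫ x in u..v, |φ' x| • exp (φ x * I)‖ ≤ 2 := by
  have hbound := norm_integral_deriv_smul_exp_mul_I_le_two hφ hφ'
  rcases isPreconnected_uIcc.abs_eqOn_or_abs_eqOn_neg hφ' hne with hs | hs
  · rwa [integral_congr (g := fun x => φ' x • exp (φ x * I)) fun x hx => by
      simp only [hs hx]]
  · rwa [integral_congr (g := fun x => -(φ' x • exp (φ x * I))) fun x hx => by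
      simp only [hs hx, Pi.neg_apply, neg_smul], intervalIntegral.integral_neg, norm_neg]

open Complex in
theorem norm_integral_exp_mul_I_le {φ φ' : ℝ → ℝ} {a b γ : ℝ} (hab : a ≤ b) (hγ : 0 < γ)
    (hφ : ∀ x ∈ Icc a b, HasDerivAt φ (φ' x) x) (hφ' : ContinuousOn φ' (Icc a b))
    (hlow : ∀ x ∈ Icc a b, γ ≤ |φ' x|)
    (hmono : MonotoneOn φ' (Icc a b) ∨ AntitoneOn φ' (Icc a b)) :
    ‖∫ x in a..b, exp (φ x * I)‖ ≤ 2 / γ := by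
  have hpos : ∀ x ∈ Icc a b, 0 < |φ' x| := fun x hx => hγ.trans_le (hlow x hx)
  have hne : ∀ x ∈ Icc a b, φ' x ≠ 0 := fun x hx => abs_pos.1 (hpos x hx)
  set h : ℝ → ℂ := fun x => |φ' x| • exp (φ x * I)
  have hprim : ∀ u ∈ Icc a b, ∀ v ∈ Icc a b, ‖∫ x in u..v, h x‖ ≤ 2 := fun u hu v hv =>
    have hsub := uIcc_subset_Icc hu hv
    norm_integral_abs_deriv_smul_exp_mul_I_le_two (fun x hx => hφ x (hsub hx)) (hφ'.mono hsub)
      fun x hx => hne x (hsub hx)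
  have habs : MonotoneOn (|φ' ·|) (Icc a b) ∨ AntitoneOn (|φ' ·|) (Icc a b) := by
    rcases isPreconnected_Icc.abs_eqOn_or_abs_eqOn_neg hφ' hne with hs | hs <;>
      rcases hmono with hm | hm
    · exact .inl (hm.congr hs.symm)
    · exact .inr (hm.congr hs.symm)
    · exact .inr (hm.neg.congr hs.symm)
    · exact .inl (hm.neg.congr hs.symm)
  have hweight : MonotoneOn (fun x => 1 / |φ' x|) (Icc a b) ∨
      AntitoneOn (fun x => 1 / |φ' x|) (Icc a b) :=
    habs.symm.imp (fun hm x hx y hy hxy => one_div_le_one_div_of_le (hpos y hy) (hm hx hy hxy))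
      fun hm x hx y hy hxy => one_div_le_one_div_of_le (hpos x hx) (hm hx hy hxy)
  have hφc : ContinuousOn φ (Icc a b) := fun x hx => (hφ x hx).continuousAt.continuousWithinAt
  have hint : IntervalIntegrable h volume a b :=
    (hφ'.abs.smul ((continuous_ofReal.comp_continuousOn hφc).mul continuousOn_const).cexp
      ).intervalIntegrable_of_Icc hab
  have heq : ∫ x in a..b, exp (φ x * I) = ∫ x in a..b, (1 / |φ' x|) • h x :=
    integral_congr fun x hx => by
      simp only [h, smul_smul, one_div_mul_cancel (hpos x (uIcc_of_le hab ▸ hx)).ne', one_smul]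
  calc ‖∫ x in a..b, exp (φ x * I)‖ = ‖∫ x in a..b, (1 / |φ' x|) • h x‖ := by rw [heq]
    _ ≤ 1 / γ * 2 := norm_intervalIntegral_smul_le_of_monotoneOn_or_antitoneOn hweight hab
        (fun x hx => (one_div_pos.2 (hpos x hx)).le)
        (fun x hx => one_div_le_one_div_of_le hγ (hlow x hx)) hint hprim
    _ = 2 / γ := by ring

/-- Van der Corput's lemma: if `|f'| ≥ γ > 0` on `[a,b]` with `f'` continuous and monotone
there, then `|∫_a^b exp(i f(x)/hbar) dx| ≤ 4 hbar/γ`. -/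
theorem van_der_corput (a b hbar γ : ℝ) (hab : a < b) (hh : 0 < hbar) (hγ : 0 < γ)
    (f f' : ℝ → ℝ)
    (hderiv : ∀ x ∈ Set.Icc a b, HasDerivAt f (f' x) x)
    (hcont : ContinuousOn f' (Set.Icc a b))
    (hlow : ∀ x ∈ Set.Icc a b, γ ≤ |f' x|)
    (hmono : MonotoneOn f' (Set.Icc a b) ∨ AntitoneOn f' (Set.Icc a b)) :
    ‖∫ x in a..b, Complex.exp (Complex.I * f x / hbar)‖ ≤ 4 * hbar / γ := by
  have hlow' : ∀ x ∈ Icc a b, γ / hbar ≤ |f' x / hbar| := fun x hx => by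
    rw [abs_div, abs_of_pos hh]; gcongr; exact hlow x hx
  have hmono' : MonotoneOn (f' · / hbar) (Icc a b) ∨ AntitoneOn (f' · / hbar) (Icc a b) :=
    hmono.imp (fun hm x hx y hy hxy => div_le_div_of_nonneg_right (hm hx hy hxy) hh.le)
      fun hm x hx y hy hxy => div_le_div_of_nonneg_right (hm hx hy hxy) hh.le
  have hbound := norm_integral_exp_mul_I_le hab.le (div_pos hγ hh)
    (fun x hx => (hderiv x hx).div_const hbar) (hcont.div_const hbar) hlow' hmono'
  calc ‖∫ x in a..b, Complex.exp (Complex.I * f x / hbar)‖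
      = ‖∫ x in a..b, Complex.exp ((f x / hbar : ℝ) * Complex.I)‖ := by
        congr 1; refine integral_congr fun x _ => ?_; push_cast; congr 1; ring
    _ ≤ 2 / (γ / hbar) := hbound
    _ ≤ 4 * hbar / γ := by rw [div_div_eq_mul_div]; gcongr; norm_num
end

section
/- (Pairing of bosonic and fermionic excited states) Let E be a complex Hilbert space, Q a continuous linear operator on E with Q∘Q = 0 and Hilbert-space adjoint Q†, H = (1/2)(Q∘Q† + Q†∘Q), and let σ be a continuous linear operator on E with σ∘σ = id, σ† = σ, and σ∘Q = −Q∘σ. Fix a real number μ > 0 and set B_μ = {φ ∈ E : Hφ = μφ and σφ = φ} and F_μ = {φ ∈ E : Hφ = μφ and σφ = −φ}. Then the operator Q + Q† maps B_μ into F_μ and F_μ into B_μ, and its restriction B_μ → F_μ is a linear bijection (with inverse (1/(2μ))(Q + Q†) restricted to F_μ); in particular B_μ and F_μ are isomorphic as complex vector spaces. -/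
open ContinuousLinearMap Set

/-- Pairing of bosonic and fermionic excited states: for `μ > 0`, the operator `Q + Q†`
maps `B_μ` into `F_μ` and `F_μ` into `B_μ`, with `(1/(2μ))(Q + Q†)` as a two-sided inverse,
so its restriction is a linear bijection `B_μ → F_μ`. -/
theorem susy_excited_pairing {E : Type*} [NormedAddCommGroup E] [InnerProductSpace ℂ E]
    [CompleteSpace E] (Q : E →L[ℂ] E) (hQ : Q ∘L Q = 0)
    (H : E →L[ℂ] E) (hH : H = (1 / 2 : ℂ) • (Q ∘L adjoint Q + adjoint Q ∘L Q))
    (σ : E →L[ℂ] E) (hσ2 : σ ∘L σ = ContinuousLinearMap.id ℂ E) (hσadj : adjoint σ = σ)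
    (hσQ : σ ∘L Q = -(Q ∘L σ))
    (μ : ℝ) (hμ : 0 < μ)
    (B F : Set E)
    (hB : B = {φ : E | H φ = (μ : ℂ) • φ ∧ σ φ = φ})
    (hF : F = {φ : E | H φ = (μ : ℂ) • φ ∧ σ φ = -φ}) :
    MapsTo (fun φ => (Q + adjoint Q) φ) B F ∧
    MapsTo (fun φ => (Q + adjoint Q) φ) F B ∧
    (∀ φ ∈ B, (1 / (2 * μ) : ℝ) • (Q + adjoint Q) ((Q + adjoint Q) φ) = φ) ∧
    (∀ φ ∈ F, (1 / (2 * μ) : ℝ) • (Q + adjoint Q) ((Q + adjoint Q) φ) = φ) ∧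
    BijOn (fun φ => (Q + adjoint Q) φ) B F := by
  set T := Q + adjoint Q with hT
  -- adjoint Q squared is zero
  have hQ2 : adjoint Q ∘L adjoint Q = 0 := by
    have := congrArg adjoint hQ
    rwa [adjoint_comp, map_zero] at this
  -- σ anticommutes with adjoint Q
  have hσQ' : σ ∘L adjoint Q = -(adjoint Q ∘L σ) := by
    have := congrArg adjoint hσQ
    rw [adjoint_comp, hσadj, map_neg, adjoint_comp, hσadj] at this
    -- this : adjoint Q ∘L σ = -(σ ∘L adjoint Q)
    rw [eq_neg_iff_add_eq_zero] at this ⊢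
    linear_combination (norm := abel) this
  -- σ anticommutes with T
  have hσT : ∀ x, σ (T x) = -(T (σ x)) := by
    intro x
    have h1 := DFunLike.congr_fun hσQ x
    have h2 := DFunLike.congr_fun hσQ' x
    simp only [ContinuousLinearMap.coe_comp', Function.comp_apply, neg_apply] at h1 h2
    simp only [hT, add_apply, map_add, h1, h2, neg_apply]
    abel
  -- T ∘ T = 2 • H
  have hTT : T ∘L T = (2 : ℂ) • H := by
    rw [hH, hT]
    simp only [add_comp, comp_add, hQ, hQ2, smul_smul]
    norm_num
    abel
  -- H commutes with T
  have hHT : H ∘L T = T ∘L H := by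
    rw [hH, hT]
    simp only [add_comp, comp_add, smul_comp, comp_smul, add_comp, comp_add,
      comp_assoc]
    rw [hQ, hQ2]
    simp only [comp_zero, zero_comp]
    congr 1
    simp only [← comp_assoc, hQ, hQ2]
    simp
    abel
  have hHTx : ∀ x, H (T x) = T (H x) := fun x => by
    simpa using DFunLike.congr_fun hHT x
  have hTTx : ∀ x, T (T x) = (2 : ℂ) • H x := fun x => by
    have := DFunLike.congr_fun hTT x
    simpa using this
  have hμ0 : (μ : ℂ) ≠ 0 := by exact_mod_cast hμ.ne'
  -- key inverse fact
  have hinv : ∀ x, H x = (μ : ℂ) • x → (1 / (2 * μ) : ℝ) • T (T x) = x := by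
    intro x hx
    rw [hTTx, hx, smul_smul, ← Complex.coe_smul, smul_smul,
      show ((1 / (2 * μ) : ℝ) : ℂ) * ((2 : ℂ) * (μ : ℂ)) = 1 by
        push_cast; field_simp, one_smul]
  have hBF : MapsTo (fun φ => T φ) B F := by
    intro φ hφ
    rw [hB] at hφ
    rw [hF]
    obtain ⟨h1, h2⟩ := hφ
    refine ⟨?_, ?_⟩
    · rw [hHTx, h1, map_smul]
    · rw [hσT, h2]
  have hFB : MapsTo (fun φ => T φ) F B := by
    intro φ hφ
    rw [hF] at hφ
    rw [hB]
    obtain ⟨h1, h2⟩ := hφ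
    refine ⟨?_, ?_⟩
    · rw [hHTx, h1, map_smul]
    · rw [hσT, h2]; simp
  have hinvB : ∀ φ ∈ B, (1 / (2 * μ) : ℝ) • T (T φ) = φ := by
    intro φ hφ; rw [hB] at hφ; exact hinv φ hφ.1
  have hinvF : ∀ φ ∈ F, (1 / (2 * μ) : ℝ) • T (T φ) = φ := by
    intro φ hφ; rw [hF] at hφ; exact hinv φ hφ.1
  refine ⟨hBF, hFB, hinvB, hinvF, hBF, ?_, ?_⟩
  · -- InjOn
    intro x hx y hy hxy
    have := congrArg (fun z => (1 / (2 * μ) : ℝ) • T z) hxy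
    simp only at this
    rw [hinvB x hx, hinvB y hy] at this
    exact this
  · -- SurjOn
    intro ψ hψ
    refine ⟨(1 / (2 * μ) : ℝ) • T ψ, ?_, ?_⟩
    · have : T ψ ∈ B := hFB hψ
      rw [hB] at this ⊢
      obtain ⟨h1, h2⟩ := this
      refine ⟨?_, ?_⟩
      · rw [map_smul_of_tower, h1, smul_comm]
      · rw [map_smul_of_tower, h2]
    · simp only [map_smul_of_tower]
      exact hinvF ψ hψ
end

section
/- (Witten index) Let E be a finite-dimensional complex inner product space, Q a linear endomorphism of E with Q∘Q = 0 and adjoint Q†, H = (1/2)(Q∘Q† + Q†∘Q), and let σ be a linear endomorphism of E with σ∘σ = id, σ† = σ, and σ∘Q = −Q∘σ. Then for every real β > 0, the trace of σ∘exp(−βH) equals dim(ker H ∩ ker(σ − id)) − dim(ker H ∩ ker(σ + id)); in particular this trace is an integer independent of β. -/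
/-!
The operator `A = Q + Q†` is self-adjoint, satisfies `A ∘ A = 2H` (because `Q² = 0`) and
anticommutes with `σ`. In an orthonormal eigenbasis of `A`, `σ` maps a `μ`-eigenvector to a
`(-μ)`-eigenvector, so for `μ ≠ 0` the diagonal entry of `σ ∘ exp(-βH)` vanishes, while on
`ker A = ker H` the operator `exp(-βH)` is the identity. Hence the trace equals that of `σ ∘ P`
with `P` the orthogonal projection onto `ker H`, and since `σ` preserves `ker H`,
`σ ∘ P = P₊ - P₋` with `P± = (P ± σ ∘ P)/2` the projections onto the `±1`-eigenspaces of `σ`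
in `ker H`.
-/

open ContinuousLinearMap Module

theorem ContinuousLinearMap.exp_apply_of_apply_eq_smul {𝕂 E : Type*} [NontriviallyNormedField 𝕂]
    [CharZero 𝕂] [ContinuousSMul ℚ 𝕂] [CompleteSpace 𝕂] [NormedAddCommGroup E] [NormedSpace 𝕂 E]
    [CompleteSpace E] {T : E →L[𝕂] E} {v : E} {c : 𝕂} (h : T v = c • v) :
    NormedSpace.exp T v = NormedSpace.exp c • v := by
  have hpow : ∀ n : ℕ, (T ^ n) v = c ^ n • v := by
    intro n
    induction n with
    | zero => simp
    | succ n ih => rw [pow_succ, mul_apply_eq_comp, h, map_smul, ih, smul_smul, ← pow_succ']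
  refine ((NormedSpace.exp_series_hasSum_exp' (𝕂 := 𝕂) T).mapL (apply 𝕂 E v)).unique ?_
  simpa [hpow, smul_smul] using (NormedSpace.exp_series_hasSum_exp' (𝕂 := 𝕂) c).smul_const v

section Supercharge

variable {R : Type*} [NonUnitalRing R] [StarRing R]

theorem add_star_self_mul_self_of_mul_self_eq_zero {x : R} (hx : x * x = 0) :
    (x + star x) * (x + star x) = x * star x + star x * x := by
  have hx' : star x * star x = 0 := by rw [← star_mul, hx, star_zero]
  simp only [add_mul, mul_add, hx, hx', zero_add, add_comm]

theorem mul_add_star_self_of_mul_eq_neg {σ x : R} (hσ : IsSelfAdjoint σ) (hσx : σ * x = -(x * σ)) :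
    σ * (x + star x) = -((x + star x) * σ) := by
  have hσx' : σ * star x = -(star x * σ) := by
    have h := congrArg star hσx
    rw [star_mul, star_neg, star_mul, hσ.star_eq] at h
    rw [h, neg_neg]
  rw [mul_add, add_mul, hσx, hσx', neg_add]

end Supercharge

section Involution

variable {R V : Type*} [Field R] [CharZero R] [AddCommGroup V] [Module R V]

theorem LinearMap.isProj_half_add_smul_comp {σ f : V →ₗ[R] V} {p : Submodule R V} {ε : R}
    (hε : ε * ε = 1) (hσ : σ ∘ₗ σ = LinearMap.id) (hσp : ∀ x ∈ p, σ x ∈ p) (hf : IsProj p f) :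
    IsProj (p ⊓ ker (σ - ε • LinearMap.id)) ((2⁻¹ : R) • (f + ε • σ ∘ₗ f)) := by
  have hσσ (x : V) : σ (σ x) = x := LinearMap.congr_fun hσ x
  constructor
  · intro x
    have hfx := hf.map_mem x
    rw [Submodule.mem_inf, mem_ker]
    refine ⟨?_, ?_⟩
    · simpa using p.smul_mem _ (p.add_mem hfx (p.smul_mem ε (hσp _ hfx)))
    · simp only [sub_apply, smul_apply, add_apply, comp_apply, map_smul, map_add, hσσ,
        id_apply, smul_add, smul_smul]
      linear_combination (norm := module) (-2⁻¹ : R) • hε • σ (f x)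
  · rintro x ⟨hxp, hxσ⟩
    have hσx : σ x = ε • x := sub_eq_zero.mp hxσ
    simp only [smul_apply, add_apply, comp_apply, hf.map_id x hxp, hσx, smul_smul, hε]
    module

theorem LinearMap.trace_comp_isProj_of_involutive [FiniteDimensional R V] {σ f : V →ₗ[R] V}
    {p : Submodule R V} (hσ : σ ∘ₗ σ = LinearMap.id) (hσp : ∀ x ∈ p, σ x ∈ p) (hf : IsProj p f) :
    trace R V (σ ∘ₗ f) =
      finrank R ↥(p ⊓ ker (σ - LinearMap.id)) - finrank R ↥(p ⊓ ker (σ + LinearMap.id)) := by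
  have hplus := isProj_half_add_smul_comp (one_mul 1) hσ hσp hf
  have hminus := isProj_half_add_smul_comp (by norm_num : (-1 : R) * -1 = 1) hσ hσp hf
  simp only [one_smul, neg_smul, sub_neg_eq_add] at hplus hminus
  have hsplit : σ ∘ₗ f = (2⁻¹ : R) • (f + σ ∘ₗ f) - (2⁻¹ : R) • (f + -(σ ∘ₗ f)) := by
    ext x
    simp only [sub_apply, smul_apply, add_apply, neg_apply]
    module
  rw [hsplit, map_sub, hplus.trace, hminus.trace]

end Involution

theorem LinearMap.map_mem_ker_of_comp_eq_neg_comp {R M : Type*} [Ring R] [AddCommGroup M]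
    [Module R M] {A σ : M →ₗ[R] M} (hσA : σ ∘ₗ A = -(A ∘ₗ σ)) {x : M} (hx : x ∈ ker A) :
    σ x ∈ ker A := by
  rw [mem_ker] at hx ⊢
  simpa [hx] using (LinearMap.congr_fun hσA x).symm

namespace LinearMap.IsSymmetric

variable {𝕜 E : Type*} [RCLike 𝕜] [NormedAddCommGroup E] [InnerProductSpace 𝕜 E]
  {A σ : E →ₗ[𝕜] E} {v : E} {μ : ℝ}

open scoped InnerProductSpace

theorem inner_map_self_eq_zero_of_comp_eq_neg_comp (hA : A.IsSymmetric)
    (hσA : σ ∘ₗ A = -(A ∘ₗ σ)) (hμ : μ ≠ 0) (hv : A v = (μ : 𝕜) • v) : ⟪v, σ v⟫_𝕜 = 0 := by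
  have hσ (x : E) : σ (A x) = -A (σ x) := LinearMap.congr_fun hσA x
  have h : (μ : 𝕜) * ⟪v, σ v⟫_𝕜 = -((μ : 𝕜) * ⟪v, σ v⟫_𝕜) :=
    calc (μ : 𝕜) * ⟪v, σ v⟫_𝕜 = ⟪A v, σ v⟫_𝕜 := by rw [hv, inner_smul_left, RCLike.conj_ofReal]
      _ = ⟪v, A (σ v)⟫_𝕜 := hA v (σ v)
      _ = -⟪v, σ (A v)⟫_𝕜 := by rw [hσ, inner_neg_right, neg_neg]
      _ = -((μ : 𝕜) * ⟪v, σ v⟫_𝕜) := by rw [hv, map_smul, inner_smul_right]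
  simpa [hμ] using self_eq_neg.mp h

theorem mem_orthogonal_ker_of_apply_eq_smul (hA : A.IsSymmetric) (hμ : μ ≠ 0)
    (hv : A v = (μ : 𝕜) • v) : v ∈ (ker A)ᗮ := by
  have hv' : v ∈ range A := ⟨(μ : 𝕜)⁻¹ • v, by simp [hv, smul_smul, hμ]⟩
  rw [← hA.orthogonal_range]
  exact (range A).le_orthogonal_orthogonal hv'

theorem trace_comp_eq_trace_comp_starProjection_ker [FiniteDimensional 𝕜 E] (hA : A.IsSymmetric)
    (hσA : σ ∘ₗ A = -(A ∘ₗ σ)) {T : E →ₗ[𝕜] E} {f : ℝ → 𝕜} (hf : f 0 = 1)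
    (hT : ∀ (μ : ℝ) v, A v = (μ : 𝕜) • v → T v = f μ • v) :
    trace 𝕜 E (σ ∘ₗ T) = trace 𝕜 E (σ ∘ₗ (ker A).starProjection) := by
  obtain ⟨n, hn⟩ : ∃ n, finrank 𝕜 E = n := ⟨_, rfl⟩
  let b := hA.eigenvectorBasis hn
  rw [trace_eq_sum_inner _ b, trace_eq_sum_inner _ b]
  refine Fintype.sum_congr _ _ fun i => ?_
  have hb := hA.apply_eigenvectorBasis hn i
  rw [comp_apply, comp_apply, hT _ _ hb]
  by_cases h0 : hA.eigenvalues hn i = 0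
  · have hker : b i ∈ ker A := by rw [mem_ker, hb, h0, RCLike.ofReal_zero, zero_smul]
    rw [h0, hf, one_smul, ContinuousLinearMap.coe_coe,
      Submodule.starProjection_eq_self_iff.mpr hker]
  · rw [ContinuousLinearMap.coe_coe, ((ker A).starProjection_apply_eq_zero_iff).mpr
      (hA.mem_orthogonal_ker_of_apply_eq_smul h0 hb), map_smul, inner_smul_right,
      hA.inner_map_self_eq_zero_of_comp_eq_neg_comp hσA h0 hb, map_zero, inner_zero_right,
      mul_zero]

end LinearMap.IsSymmetric

/-- Witten index: on a finite-dimensional complex inner product space, with `Q² = 0`,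
`H = (1/2)(Q Q† + Q† Q)` and a grading `σ`, the trace of `σ exp(-βH)` equals
`dim(ker H ∩ ker(σ - 1)) - dim(ker H ∩ ker(σ + 1))` for every `β > 0`; in particular it
is an integer independent of `β`. -/
theorem witten_index {E : Type*} [NormedAddCommGroup E] [InnerProductSpace ℂ E]
    [FiniteDimensional ℂ E]
    (Q : E →L[ℂ] E) (hQ : Q ∘L Q = 0)
    (H : E →L[ℂ] E) (hH : H = (1 / 2 : ℂ) • (Q ∘L adjoint Q + adjoint Q ∘L Q))
    (σ : E →L[ℂ] E) (hσ2 : σ ∘L σ = ContinuousLinearMap.id ℂ E) (hσadj : adjoint σ = σ)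
    (hσQ : σ ∘L Q = -(Q ∘L σ)) :
    ∀ β : ℝ, 0 < β →
      LinearMap.trace ℂ E ((σ ∘L NormedSpace.exp ((-β : ℂ) • H) : E →L[ℂ] E) : E →ₗ[ℂ] E) =
        ((finrank ℂ ↥(LinearMap.ker (H : E →ₗ[ℂ] E) ⊓ LinearMap.ker ((σ - ContinuousLinearMap.id ℂ E : E →L[ℂ] E) : E →ₗ[ℂ] E)) : ℂ) -
          (finrank ℂ ↥(LinearMap.ker (H : E →ₗ[ℂ] E) ⊓ LinearMap.ker ((σ + ContinuousLinearMap.id ℂ E : E →L[ℂ] E) : E →ₗ[ℂ] E)) : ℂ)) := by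
  intro β _
  have hsq : (Q + adjoint Q) ∘L (Q + adjoint Q) = Q ∘L adjoint Q + adjoint Q ∘L Q := by
    simpa only [mul_def, star_eq_adjoint] using
      add_star_self_mul_self_of_mul_self_eq_zero ((mul_def Q Q).trans hQ)
  have hσA : σ ∘L (Q + adjoint Q) = -((Q + adjoint Q) ∘L σ) := by
    simpa only [mul_def, star_eq_adjoint] using
      mul_add_star_self_of_mul_eq_neg (by rw [isSelfAdjoint_iff', hσadj]) hσQ
  set A : E →L[ℂ] E := Q + adjoint Q
  have hAsa : IsSelfAdjoint A := by
    simpa only [star_eq_adjoint] using IsSelfAdjoint.add_star_self Q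
  have hA : (A : E →ₗ[ℂ] E).IsSymmetric := isSelfAdjoint_iff_isSymmetric.mp hAsa
  have hker : LinearMap.ker (H : E →ₗ[ℂ] E) = LinearMap.ker (A : E →ₗ[ℂ] E) := by
    rw [hH, ← hsq, toLinearMap_smul, LinearMap.ker_smul _ _ (by norm_num)]
    nth_rw 1 [← hAsa.adjoint_eq]
    exact ker_adjoint_comp_self A
  have hexp (μ : ℝ) (v : E) (hv : A v = (μ : ℂ) • v) :
      NormedSpace.exp ((-β : ℂ) • H) v = NormedSpace.exp (-(β * μ ^ 2 / 2) : ℂ) • v := by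
    refine exp_apply_of_apply_eq_smul ?_
    simp only [hH, ← hsq, smul_apply, comp_apply, hv, map_smul, smul_smul]
    congr 1
    ring
  have hσA' : (σ : E →ₗ[ℂ] E) ∘ₗ A = -((A : E →ₗ[ℂ] E) ∘ₗ (σ : E →ₗ[ℂ] E)) := by
    rw [← toLinearMap_comp, hσA, toLinearMap_neg, toLinearMap_comp]
  have hσσ : (σ : E →ₗ[ℂ] E) ∘ₗ σ = LinearMap.id := by
    rw [← toLinearMap_comp, hσ2, coe_id]
  rw [toLinearMap_comp, hA.trace_comp_eq_trace_comp_starProjection_ker hσA'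
    (f := fun μ => NormedSpace.exp (-(β * μ ^ 2 / 2) : ℂ)) (by simp) hexp, hker,
    toLinearMap_sub, toLinearMap_add, coe_id]
  exact LinearMap.trace_comp_isProj_of_involutive hσσ
    (fun _ => LinearMap.map_mem_ker_of_comp_eq_neg_comp hσA')
    ⟨(LinearMap.ker _).starProjection_apply_mem, fun _ => Submodule.starProjection_eq_self_iff.mpr⟩
end

section
/- (Zeroth De Rham cohomology) Let M be a smooth manifold without boundary modelled on a finite-dimensional real normed vector space, and let f : M → ℝ be a smooth function. Then the differential of f vanishes at every point of M (i.e. mfderiv f x = 0 for all x ∈ M) if and only if f is constant on every connected component of M, i.e. f(y) = f(x) whenever y lies in the connected component of x. -/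
open Manifold Filter Topology

/-! A function with vanishing differential is locally constant: in a chart around any point it
becomes a map on an open subset of the model space with zero Fréchet derivative, hence constant
on a small ball by the mean value inequality. Since a manifold is locally connected, being locally
constant is the same as being constant on connected components. -/

theorem eventuallyEq_const_of_eventually_hasFDerivAt_zero
    {E F : Type*} [NormedAddCommGroup E] [NormedSpace ℝ E] [NormedAddCommGroup F]
    [NormedSpace ℝ F] {g : E → F} {a : E} (h : ∀ᶠ y in 𝓝 a, HasFDerivAt g (0 : E →L[ℝ] F) y) :
    g =ᶠ[𝓝 a] fun _ ↦ g a := by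
  obtain ⟨ε, hε, hball⟩ := Metric.eventually_nhds_iff_ball.mp h
  filter_upwards [Metric.ball_mem_nhds a hε] with y hy
  exact Metric.isOpen_ball.is_const_of_fderiv_eq_zero (convex_ball a ε).isPreconnected
    (fun z hz ↦ (hball z hz).differentiableAt.differentiableWithinAt)
    (fun z hz ↦ (hball z hz).fderiv) hy (Metric.mem_ball_self hε)

section Manifold

variable {E : Type*} [NormedAddCommGroup E] [NormedSpace ℝ E]
  {H : Type*} [TopologicalSpace H] {I : ModelWithCorners ℝ E H}
  {M : Type*} [TopologicalSpace M] [ChartedSpace H M]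
  {F : Type*} [NormedAddCommGroup F] [NormedSpace ℝ F] {f : M → F}

theorem hasFDerivAt_comp_extChartAt_symm_zero [I.Boundaryless] [IsManifold I 1 M]
    (hf : MDifferentiable I 𝓘(ℝ, F) f) (hf' : ∀ x, mfderiv I 𝓘(ℝ, F) f x = 0) {x : M} {y : E}
    (hy : y ∈ (extChartAt I x).target) :
    HasFDerivAt (f ∘ (extChartAt I x).symm) (0 : E →L[ℝ] F) y := by
  have hsymm : MDifferentiableAt 𝓘(ℝ, E) I (extChartAt I x).symm y :=
    (mdifferentiableOn_extChartAt_symm y hy).mdifferentiableAt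
      ((isOpen_extChartAt_target x).mem_nhds hy)
  have hfy : HasMFDerivAt I 𝓘(ℝ, F) f ((extChartAt I x).symm y) 0 := by
    simpa only [hf'] using (hf ((extChartAt I x).symm y)).hasMFDerivAt
  have hcomp := hfy.comp y hsymm.hasMFDerivAt
  rw [ContinuousLinearMap.zero_comp] at hcomp
  exact hasMFDerivAt_iff_hasFDerivAt.mp hcomp

theorem isLocallyConstant_of_mfderiv_eq_zero [I.Boundaryless] [IsManifold I 1 M]
    (hf : MDifferentiable I 𝓘(ℝ, F) f) (hf' : ∀ x, mfderiv I 𝓘(ℝ, F) f x = 0) :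
    IsLocallyConstant f := by
  refine (IsLocallyConstant.iff_eventually_eq f).mpr fun x ↦ ?_
  have hchart : f ∘ (extChartAt I x).symm =ᶠ[𝓝 (extChartAt I x x)] fun _ ↦ f x := by
    simpa only [Function.comp_apply, extChartAt_to_inv] using
      eventuallyEq_const_of_eventually_hasFDerivAt_zero <|
        eventually_of_mem (extChartAt_target_mem_nhds x) fun y hy ↦
          hasFDerivAt_comp_extChartAt_symm_zero hf hf' hy
  rw [← map_extChartAt_symm_nhdsWithin_range (I := I) x, I.range_eq_univ, nhdsWithin_univ]
  exact hchart

theorem IsLocallyConstant.mfderiv_eq_zero (hf : IsLocallyConstant f) (x : M) :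
    mfderiv I 𝓘(ℝ, F) f x = 0 := by
  have hconst : f =ᶠ[𝓝 x] fun _ ↦ f x := hf.eventually_eq x
  rw [hconst.mfderiv_eq, mfderiv_const]

end Manifold

theorem isLocallyConstant_iff_forall_mem_connectedComponent {X Y : Type*} [TopologicalSpace X]
    [LocallyConnectedSpace X] {f : X → Y} :
    IsLocallyConstant f ↔ ∀ x y, y ∈ connectedComponent x → f y = f x :=
  ⟨fun hf _ _ hy ↦ hf.apply_eq_of_isPreconnected isPreconnected_connectedComponent hy
    mem_connectedComponent,
   fun h ↦ IsLocallyConstant.of_constant_on_connected_components h⟩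

theorem mfderiv_eq_zero_iff_constant_on_components_general
    {E : Type*} [NormedAddCommGroup E] [NormedSpace ℝ E]
    {M : Type*} [TopologicalSpace M] [ChartedSpace E M]
    [IsManifold (modelWithCornersSelf ℝ E) (⊤ : ℕ∞) M]
    (f : M → ℝ) (hf : ContMDiff (modelWithCornersSelf ℝ E) (modelWithCornersSelf ℝ ℝ) (⊤ : ℕ∞) f) :
    (∀ x : M, mfderiv (modelWithCornersSelf ℝ E) (modelWithCornersSelf ℝ ℝ) f x = 0) ↔
      ∀ x y : M, y ∈ connectedComponent x → f y = f x := by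
  have : LocallyConnectedSpace M := ChartedSpace.locallyConnectedSpace E M
  rw [← isLocallyConstant_iff_forall_mem_connectedComponent]
  exact ⟨isLocallyConstant_of_mfderiv_eq_zero (hf.mdifferentiable (by simp)),
    IsLocallyConstant.mfderiv_eq_zero⟩

/-- Zeroth De Rham cohomology: on a smooth boundaryless manifold `M` modelled on a
finite-dimensional real normed space, a smooth function `f : M → ℝ` has vanishing
differential everywhere iff it is constant on every connected component of `M`. -/
theorem mfderiv_eq_zero_iff_constant_on_components
    {E : Type*} [NormedAddCommGroup E] [NormedSpace ℝ E] [FiniteDimensional ℝ E]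
    {M : Type*} [TopologicalSpace M] [ChartedSpace E M]
    [IsManifold (modelWithCornersSelf ℝ E) (⊤ : ℕ∞) M]
    (f : M → ℝ) (hf : ContMDiff (modelWithCornersSelf ℝ E) (modelWithCornersSelf ℝ ℝ) (⊤ : ℕ∞) f) :
    (∀ x : M, mfderiv (modelWithCornersSelf ℝ E) (modelWithCornersSelf ℝ ℝ) f x = 0) ↔
      ∀ x y : M, y ∈ connectedComponent x → f y = f x :=
  mfderiv_eq_zero_iff_constant_on_components_general f hf
end
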